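/- Let X = (X₁, X₂) in ℝ^{d₁+d₂} have the reparametrized multivariate Student's t density t_d(x; μ, Γ, ν) = C_d(ν) det(Γ)^{-1/2} (1 + (x-μ)ᵀΓ⁻¹(x-μ)/(ν-2))^{-(d+ν)/2} with C_d(ν) = Γ((d+ν)/2)/(√(π^d(ν-2)^d) Γ(ν/2)), ν > 2, and Γ positive definite with blocks Γ₁₁, Γ₁₂, Γ₂₂. Then t_d(x; μ, Γ, ν) = t_{d₁}(x₁; μ_{1|2}(x₂), Γ_{1|2}(x₂), ν + d₂) · t_{d₂}(x₂; μ₂, Γ₂₂, ν), where μ_{1|2}(x₂) = μ₁ + Γ₁₂Γ₂₂⁻¹(x₂ - μ₂) and Γ_{1|2}(x₂) = ((ν - 2 + (x₂-μ₂)ᵀΓ₂₂⁻¹(x₂-μ₂))/(ν - 2 + d₂)) (Γ₁₁ - Γ₁₂Γ₂₂⁻¹Γ₁₂ᵀ). -/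

import Mathlib

open Matrix Real

/-- The reparametrized multivariate Student's `t` density with mean `μ`,
covariance `Γ` and degrees of freedom `ν`. -/
noncomputable def tDens {n : Type*} [Fintype n] [DecidableEq n]
    (μ : n → ℝ) (Γ : Matrix n n ℝ) (ν : ℝ) (x : n → ℝ) : ℝ :=
  (Real.Gamma (((Fintype.card n : ℝ) + ν) / 2) /
      (Real.sqrt (π ^ (Fintype.card n) * (ν - 2) ^ (Fintype.card n)) *
        Real.Gamma (ν / 2))) *
    Γ.det ^ (-(1 : ℝ) / 2) *
    (1 + ((x - μ) ⬝ᵥ (Γ⁻¹ *ᵥ (x - μ))) / (ν - 2)) ^ (-((Fintype.card n : ℝ) + ν) / 2)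

/-!
Write `S = Γ₁₁ - Γ₁₂ Γ₂₂⁻¹ Γ₁₂ᵀ`. Then `det Γ = det Γ₂₂ · det S`, and completing the square splits
the Mahalanobis form `(x - μ)ᵀ Γ⁻¹ (x - μ)` as `q₁ + q₂`, where `q₂` is the form of `x₂ - μ₂` for
`Γ₂₂` and `q₁` the form of `x₁ - μ_{1|2}` for `S`. For covariance `c • Γ` the density equals
`K_d(ν) s^(ν/2) (det Γ)^(-1/2) (s + q)^(-(d+ν)/2)` with `s = c (ν - 2)`. The conditional factor
has `s = ν - 2 + q₂`, so its power of `s` cancels the marginal's `(ν - 2 + q₂)^(-(d₂+ν)/2)`, and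
the constants `K` telescope through the Gamma factors.
-/

open scoped ComplexOrder

namespace Matrix

variable {m n : Type*} [Fintype m] [Fintype n] [DecidableEq m] [DecidableEq n]

theorem det_fromBlocks₂₂_of_isUnit {α : Type*} [CommRing α] (A : Matrix m m α)
    (B : Matrix m n α) (C : Matrix n m α) {D : Matrix n n α} (hD : IsUnit D.det) :
    (fromBlocks A B C D).det = D.det * (A - B * D⁻¹ * C).det := by
  have := invertibleOfIsUnitDet D hD
  rw [det_fromBlocks₂₂, invOf_eq_nonsing_inv]

theorem PosDef.schur_complement₂₂ {𝕜 : Type*} [RCLike 𝕜] {A : Matrix m m 𝕜}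
    {B : Matrix m n 𝕜} {D : Matrix n n 𝕜} (h : (fromBlocks A B Bᴴ D).PosDef) :
    (A - B * D⁻¹ * Bᴴ).PosDef := by
  have hD : D.PosDef := h.submatrix Sum.inr_injective
  have := hD.isUnit.invertible
  refine ((PosDef.fromBlocks₂₂ A B hD).mp h.posSemidef).posDef_iff_det_ne_zero.mpr ?_
  have hM := h.det_pos.ne'
  rw [det_fromBlocks₂₂_of_isUnit _ _ _ ((isUnit_iff_isUnit_det _).mp hD.isUnit)] at hM
  exact right_ne_zero_of_mul hM

theorem sumElim_dotProduct_inv_fromBlocks_mulVec {α : Type*} [CommRing α]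
    (A : Matrix m m α) (B : Matrix m n α) {D : Matrix n n α} (hD : D.IsSymm)
    (hDdet : IsUnit D.det) (hSdet : IsUnit (A - B * D⁻¹ * Bᵀ).det) (x : m → α) (y : n → α) :
    Sum.elim x y ⬝ᵥ ((fromBlocks A B Bᵀ D)⁻¹ *ᵥ Sum.elim x y) =
      (x - (B * D⁻¹) *ᵥ y) ⬝ᵥ ((A - B * D⁻¹ * Bᵀ)⁻¹ *ᵥ (x - (B * D⁻¹) *ᵥ y)) +
        y ⬝ᵥ (D⁻¹ *ᵥ y) := by
  set S := A - B * D⁻¹ * Bᵀ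
  set u := x - (B * D⁻¹) *ᵥ y
  set w := S⁻¹ *ᵥ u
  have := invertibleOfIsUnitDet _ <| show IsUnit (fromBlocks A B Bᵀ D).det by
    rw [det_fromBlocks₂₂_of_isUnit _ _ _ hDdet]; exact hDdet.mul hSdet
  have hSw : S *ᵥ w = u := by rw [mulVec_mulVec, mul_nonsing_inv _ hSdet, one_mulVec]
  clear_value w
  have hsolve : fromBlocks A B Bᵀ D *ᵥ Sum.elim w (D⁻¹ *ᵥ (y - Bᵀ *ᵥ w)) = Sum.elim x y := by
    rw [fromBlocks_mulVec]
    simp only [Sum.elim_comp_inl, Sum.elim_comp_inr]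
    congr 1
    · calc A *ᵥ w + B *ᵥ (D⁻¹ *ᵥ (y - Bᵀ *ᵥ w)) = S *ᵥ w + (B * D⁻¹) *ᵥ y := by
            simp only [S, sub_mulVec, mulVec_sub, mulVec_mulVec, Matrix.mul_assoc]; abel
        _ = x := by rw [hSw, sub_add_cancel]
    · rw [mulVec_mulVec, mul_nonsing_inv _ hDdet, one_mulVec, add_sub_cancel]
  have hsymm : y ⬝ᵥ (D⁻¹ *ᵥ (Bᵀ *ᵥ w)) = ((B * D⁻¹) *ᵥ y) ⬝ᵥ w := by
    rw [mulVec_mulVec, dotProduct_mulVec, ← mulVec_transpose, transpose_mul, hD.inv.eq,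
      transpose_transpose]
  rw [inv_mulVec_eq_vec hsolve.symm, sumElim_dotProduct_sumElim, mulVec_sub, dotProduct_sub,
    hsymm, sub_dotProduct]
  ring

theorem PosDef.dotProduct_inv_mulVec_nonneg {Γ : Matrix n n ℝ} (hΓ : Γ.PosDef) (v : n → ℝ) :
    0 ≤ v ⬝ᵥ (Γ⁻¹ *ᵥ v) := by
  simpa only [star_trivial] using hΓ.posSemidef.inv.dotProduct_mulVec_nonneg v

end Matrix

noncomputable def tNormConst (d : ℕ) (ν : ℝ) : ℝ :=
  Gamma ((d + ν) / 2) / (√(π ^ d) * Gamma (ν / 2))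

theorem tNormConst_add_mul (d₁ d₂ : ℕ) {ν : ℝ} (hν : 0 < ν) :
    tNormConst d₁ (ν + d₂) * tNormConst d₂ ν = tNormConst (d₁ + d₂) ν := by
  have hΓ : Gamma ((ν + d₂) / 2) ≠ 0 := (Gamma_pos_of_pos (by positivity)).ne'
  simp only [tNormConst, pow_add, sqrt_mul (pow_nonneg pi_pos.le _), Nat.cast_add]
  rw [show ((d₂ : ℝ) + ν) / 2 = (ν + d₂) / 2 by ring,
    show ((d₁ : ℝ) + d₂ + ν) / 2 = (d₁ + (ν + d₂)) / 2 by ring]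
  field_simp

/-- `tDens` in terms of its scale `s` (`ν - 2`, or `c (ν - 2)` for covariance `c • Γ`), the
covariance determinant `δ` and the Mahalanobis form `q`. -/
noncomputable def tDensForm (d : ℕ) (ν s δ q : ℝ) : ℝ :=
  tNormConst d ν * s ^ (ν / 2) * δ ^ (-(1 : ℝ) / 2) * (s + q) ^ (-((d : ℝ) + ν) / 2)

theorem tDensForm_add_mul (d₁ d₂ : ℕ) {ν a δ₁ δ₂ q₁ q₂ : ℝ} (hν : 0 < ν) (hq₂ : 0 < a + q₂)
    (hδ₁ : 0 ≤ δ₁) (hδ₂ : 0 ≤ δ₂) :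
    tDensForm (d₁ + d₂) ν a (δ₂ * δ₁) (q₁ + q₂) =
      tDensForm d₁ (ν + d₂) (a + q₂) δ₁ q₁ * tDensForm d₂ ν a δ₂ q₂ := by
  have hpow : (a + q₂) ^ (-((d₂ : ℝ) + ν) / 2) = ((a + q₂) ^ ((ν + d₂) / 2))⁻¹ := by
    rw [← rpow_neg hq₂.le]; ring_nf
  have := (rpow_pos_of_pos hq₂ ((ν + d₂) / 2)).ne'
  simp only [tDensForm]
  rw [← tNormConst_add_mul d₁ d₂ hν, mul_rpow hδ₂ hδ₁, hpow, add_right_comm a q₂, ← add_assoc,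
    show -(((d₁ + d₂ : ℕ) : ℝ) + ν) / 2 = -(d₁ + (ν + d₂)) / 2 by push_cast; ring]
  field_simp

variable {n : Type*} [Fintype n] [DecidableEq n]

theorem tDens_eq_tDensForm {μ : n → ℝ} {Γ : Matrix n n ℝ} {ν : ℝ} {x : n → ℝ} (hν : 2 < ν)
    (hΓ : Γ.PosDef) :
    tDens μ Γ ν x =
      tDensForm (Fintype.card n) ν (ν - 2) Γ.det ((x - μ) ⬝ᵥ (Γ⁻¹ *ᵥ (x - μ))) := by
  set Q := (x - μ) ⬝ᵥ (Γ⁻¹ *ᵥ (x - μ))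
  have hQ : 0 ≤ Q := hΓ.dotProduct_inv_mulVec_nonneg _
  have ha : 0 < ν - 2 := by linarith
  have hbase : 1 + Q / (ν - 2) = (ν - 2 + Q) / (ν - 2) := by field_simp
  have hsqrt : √((ν - 2) ^ Fintype.card n) = (ν - 2) ^ ((Fintype.card n : ℝ) / 2) := by
    rw [sqrt_eq_rpow, ← rpow_natCast, ← rpow_mul ha.le]; ring_nf
  have hpow : (ν - 2) ^ (-((Fintype.card n : ℝ) + ν) / 2) =
      ((ν - 2) ^ (ν / 2) * (ν - 2) ^ ((Fintype.card n : ℝ) / 2))⁻¹ := by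
    rw [← rpow_add ha, ← rpow_neg ha.le]; ring_nf
  rw [tDens, tDensForm, tNormConst, hbase, div_rpow (by linarith) ha.le,
    sqrt_mul (pow_nonneg pi_pos.le _), hsqrt, hpow]
  field_simp

theorem tDens_smul_eq_tDensForm {μ : n → ℝ} {Γ : Matrix n n ℝ} {ν c : ℝ} {x : n → ℝ}
    (hν : 2 < ν) (hΓ : Γ.PosDef) (hc : 0 < c) :
    tDens μ (c • Γ) ν x =
      tDensForm (Fintype.card n) ν (c * (ν - 2)) Γ.det ((x - μ) ⬝ᵥ (Γ⁻¹ *ᵥ (x - μ))) := by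
  set Q := (x - μ) ⬝ᵥ (Γ⁻¹ *ᵥ (x - μ))
  have ha : 0 < ν - 2 := by linarith
  have hQ : 0 ≤ Q := hΓ.dotProduct_inv_mulVec_nonneg _
  have := invertibleOfNonzero hc.ne'
  have hinv : (c • Γ)⁻¹ = c⁻¹ • Γ⁻¹ := by
    rw [inv_smul _ _ ((isUnit_iff_isUnit_det _).mp hΓ.isUnit), invOf_eq_inv]
  have hbase : ν - 2 + c⁻¹ * Q = (c * (ν - 2) + Q) / c := by field_simp
  have hcpow : (c ^ Fintype.card n) ^ (-(1 : ℝ) / 2) =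
      c ^ (ν / 2) * c ^ (-((Fintype.card n : ℝ) + ν) / 2) := by
    rw [← rpow_natCast, ← rpow_mul hc.le, ← rpow_add hc]; ring_nf
  have := (rpow_pos_of_pos hc (-((Fintype.card n : ℝ) + ν) / 2)).ne'
  rw [tDens_eq_tDensForm hν (hΓ.smul hc), tDensForm, tDensForm, hinv, smul_mulVec,
    dotProduct_smul, smul_eq_mul, hbase, det_smul, mul_rpow (pow_nonneg hc.le _) hΓ.det_pos.le,
    hcpow, div_rpow (by positivity) hc.le, mul_rpow hc.le ha.le]
  field_simp

/-- Factorization of the joint mean–covariance parametrized Student's `t` density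
into the conditional density of the first block given the second block (with
`ν + d₂` degrees of freedom and scaled Schur complement covariance) times the
marginal density of the second block. -/
theorem tDens_factorization (d₁ d₂ : ℕ) (ν : ℝ) (hν : 2 < ν)
    (μ₁ : Fin d₁ → ℝ) (μ₂ : Fin d₂ → ℝ)
    (Γ₁₁ : Matrix (Fin d₁) (Fin d₁) ℝ) (Γ₁₂ : Matrix (Fin d₁) (Fin d₂) ℝ)
    (Γ₂₂ : Matrix (Fin d₂) (Fin d₂) ℝ)
    (hΓ : (Matrix.fromBlocks Γ₁₁ Γ₁₂ Γ₁₂ᵀ Γ₂₂).PosDef) :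
    ∀ (x₁ : Fin d₁ → ℝ) (x₂ : Fin d₂ → ℝ),
      tDens (Sum.elim μ₁ μ₂) (Matrix.fromBlocks Γ₁₁ Γ₁₂ Γ₁₂ᵀ Γ₂₂) ν
          (Sum.elim x₁ x₂) =
        tDens (μ₁ + (Γ₁₂ * Γ₂₂⁻¹) *ᵥ (x₂ - μ₂))
            (((ν - 2 + (x₂ - μ₂) ⬝ᵥ (Γ₂₂⁻¹ *ᵥ (x₂ - μ₂))) / (ν - 2 + d₂)) •
              (Γ₁₁ - Γ₁₂ * Γ₂₂⁻¹ * Γ₁₂ᵀ))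
            (ν + d₂) x₁ *
          tDens μ₂ Γ₂₂ ν x₂ := by
  intro x₁ x₂
  have hT : Γ₁₂ᵀ = Γ₁₂ᴴ := (conjTranspose_eq_transpose_of_trivial _).symm
  have hD : Γ₂₂.PosDef := hΓ.submatrix Sum.inr_injective
  have hS : (Γ₁₁ - Γ₁₂ * Γ₂₂⁻¹ * Γ₁₂ᵀ).PosDef := by
    rw [hT] at hΓ ⊢; exact hΓ.schur_complement₂₂
  set q₂ := (x₂ - μ₂) ⬝ᵥ (Γ₂₂⁻¹ *ᵥ (x₂ - μ₂))
  have hq₂ : 0 ≤ q₂ := hD.dotProduct_inv_mulVec_nonneg _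
  have hd₂ : (0 : ℝ) ≤ d₂ := d₂.cast_nonneg
  have hc : 0 < (ν - 2 + q₂) / (ν - 2 + d₂) := div_pos (by linarith) (by linarith)
  have hscale : (ν - 2 + q₂) / (ν - 2 + d₂) * (ν + d₂ - 2) = ν - 2 + q₂ := by
    rw [show ν + d₂ - 2 = ν - 2 + d₂ by ring, div_mul_cancel₀ _ (by linarith)]
  have hsub : Sum.elim x₁ x₂ - Sum.elim μ₁ μ₂ = Sum.elim (x₁ - μ₁) (x₂ - μ₂) := by
    ext (i | i) <;> rfl
  rw [tDens_eq_tDensForm hν hΓ, tDens_smul_eq_tDensForm (by linarith) hS hc,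
    tDens_eq_tDensForm hν hD, hsub, det_fromBlocks₂₂_of_isUnit _ _ _ hD.det_pos.ne'.isUnit,
    sumElim_dotProduct_inv_fromBlocks_mulVec _ _ (isHermitian_iff_isSymm.mp hD.1)
      hD.det_pos.ne'.isUnit hS.det_pos.ne'.isUnit, hscale, sub_add_eq_sub_sub,
    Fintype.card_sum, Fintype.card_fin, Fintype.card_fin]
  exact tDensForm_add_mul d₁ d₂ (by linarith) (by linarith) hS.det_pos.le hD.det_pos.le
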